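/- arXiv:1701.05413 — 6 statements merged into one kernel-verified Lean document; each statement's English description precedes it below -/
import Mathlib

section
/- For all λ ∈ (0,1] and t ∈ [0,1], the polynomial N(λ,t) = (1+λ)³ − (3−λ)(1+λ)λt − 4λ³t² satisfies N(λ,t) ≥ 1 − λ³ + λ²(1 − λ) ≥ 0, with N(λ,t) > 0 whenever 0 < λ < 1. -/
theorem stmt_3 (lam t : ℝ) (hl0 : 0 < lam) (hl1 : lam ≤ 1) (ht0 : 0 ≤ t) (ht1 : t ≤ 1) :
    (1 + lam) ^ 3 - (3 - lam) * (1 + lam) * lam * t - 4 * lam ^ 3 * t ^ 2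
        ≥ 1 - lam ^ 3 + lam ^ 2 * (1 - lam) ∧
    1 - lam ^ 3 + lam ^ 2 * (1 - lam) ≥ 0 ∧
    (lam < 1 →
      (1 + lam) ^ 3 - (3 - lam) * (1 + lam) * lam * t - 4 * lam ^ 3 * t ^ 2 > 0) := by
  have h1t : (0:ℝ) ≤ 1 - t := by linarith
  have hpos : (0:ℝ) ≤ 4 * lam ^ 2 * t + 3 + 2 * lam + 3 * lam ^ 2 := by positivity
  have key : lam * (1 - t) * (4 * lam ^ 2 * t + 3 + 2 * lam + 3 * lam ^ 2) ≥ 0 :=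
    mul_nonneg (mul_nonneg hl0.le h1t) hpos
  have h1 : (1 + lam) ^ 3 - (3 - lam) * (1 + lam) * lam * t - 4 * lam ^ 3 * t ^ 2
      ≥ 1 - lam ^ 3 + lam ^ 2 * (1 - lam) := by nlinarith [key]
  have h2 : 1 - lam ^ 3 + lam ^ 2 * (1 - lam) ≥ 0 := by nlinarith [sq_nonneg lam, mul_nonneg hl0.le hl0.le]
  exact ⟨h1, h2, fun h => by nlinarith [key, sq_nonneg lam, mul_pos hl0 hl0]⟩
end

section
/- For every λ with 0 < λ ≤ 1 and every t ∈ [0,1), the expression B(λ,t) = 2/(1+λ+tλ) − 1/(1+λ−tλ) + λ/(1+λ+tλ²) is strictly positive. -/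
theorem stmt_4 (lam t : ℝ) (hl0 : 0 < lam) (hl1 : lam ≤ 1) (ht0 : 0 ≤ t) (ht1 : t < 1) :
    0 < 2 / (1 + lam + t * lam) - 1 / (1 + lam - t * lam) + lam / (1 + lam + t * lam ^ 2) := by
  have ha : 0 < 1 + lam + t * lam := by nlinarith
  have hb : 0 < 1 + lam - t * lam := by nlinarith
  have hc : 0 < 1 + lam + t * lam ^ 2 := by nlinarith
  rw [div_sub_div _ _ ha.ne' hb.ne', div_add_div _ _ (mul_pos ha hb).ne' hc.ne']
  apply div_pos _ (mul_pos (mul_pos ha hb) hc)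
  nlinarith [mul_pos hl0 (sub_pos.2 ht1), mul_nonneg ht0 hl0.le, sq_nonneg (1 - t),
    mul_nonneg (mul_nonneg ht0 ht0) hl0.le, mul_pos hl0 hl0,
    mul_nonneg (mul_nonneg (sub_nonneg.2 ht1.le) (sub_nonneg.2 hl1)) hl0.le,
    mul_nonneg (mul_nonneg ht0 (sub_nonneg.2 ht1.le)) (mul_pos hl0 hl0).le,
    mul_nonneg (mul_nonneg ht0 ht0) (mul_pos hl0 hl0).le]
end

section
/- For every λ with 0 < λ ≤ 1, one has A(λ) := 2[Li₂(−λ²/(1+λ)) + Li₂(−λ/(1+λ))] + Li₂(λ²/(1+λ)²) < 0. -/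
/-- Dilogarithm on the reals: Li₂(x) = ∑_{n≥1} xⁿ/n². -/
noncomputable def Li2 (x : ℝ) : ℝ := ∑' n : ℕ, x ^ (n + 1) / ((n : ℝ) + 1) ^ 2

lemma Li2_summable {x : ℝ} (hx : |x| < 1) :
    Summable (fun n : ℕ => x ^ (n + 1) / ((n : ℝ) + 1) ^ 2) := by
  apply Summable.of_norm
  apply Summable.of_nonneg_of_le (fun n => norm_nonneg _) (fun n => ?_)
    (summable_geometric_of_lt_one (abs_nonneg x) hx)
  have h1 : (1 : ℝ) ≤ ((n : ℝ) + 1) ^ 2 := by nlinarith [Nat.cast_nonneg (α := ℝ) n]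
  have h2 : |x| ^ (n + 1) ≤ |x| ^ n := by
    apply pow_le_pow_of_le_one (abs_nonneg x) hx.le
    omega
  calc ‖x ^ (n + 1) / ((n : ℝ) + 1) ^ 2‖
      = |x| ^ (n + 1) / ((n : ℝ) + 1) ^ 2 := by
        rw [Real.norm_eq_abs, abs_div, abs_pow, abs_of_nonneg (by positivity : (0:ℝ) ≤ ((n:ℝ)+1)^2)]
    _ ≤ |x| ^ (n + 1) / 1 := by
        apply div_le_div_of_nonneg_left (by positivity) (by norm_num) h1
    _ = |x| ^ (n + 1) := by ring
    _ ≤ |x| ^ n := h2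

lemma Li2_est {x : ℝ} (hx : |x| ≤ 1 / 2) : |Li2 x - x| ≤ x ^ 2 / 2 := by
  have hx1 : |x| < 1 := lt_of_le_of_lt hx (by norm_num)
  have hs := Li2_summable hx1
  have heq : Li2 x - x = ∑' n : ℕ, x ^ (n + 2) / ((n : ℝ) + 2) ^ 2 := by
    have hc : ∀ n : ℕ, x ^ (n + 1 + 1) / ((↑(n + 1) : ℝ) + 1) ^ 2 = x ^ (n + 2) / ((n : ℝ) + 2) ^ 2 := by
      intro n; push_cast; ring_nf
    rw [Li2, Summable.tsum_eq_zero_add hs, tsum_congr hc]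
    norm_num
  rw [heq]
  have hbound : ∀ n : ℕ, ‖x ^ (n + 2) / ((n : ℝ) + 2) ^ 2‖ ≤ x ^ 2 / 4 * (1 / 2) ^ n := by
    intro n
    have h4 : (4 : ℝ) ≤ ((n : ℝ) + 2) ^ 2 := by nlinarith [Nat.cast_nonneg (α := ℝ) n]
    have hxn : |x| ^ n ≤ (1 / 2) ^ n := pow_le_pow_left₀ (abs_nonneg x) hx n
    calc ‖x ^ (n + 2) / ((n : ℝ) + 2) ^ 2‖
        = |x| ^ (n + 2) / ((n : ℝ) + 2) ^ 2 := by
          rw [Real.norm_eq_abs, abs_div, abs_pow,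
            abs_of_nonneg (by positivity : (0:ℝ) ≤ ((n:ℝ)+2)^2)]
      _ ≤ |x| ^ (n + 2) / 4 := by
          apply div_le_div_of_nonneg_left (by positivity) (by norm_num) h4
      _ = |x| ^ 2 * |x| ^ n / 4 := by ring
      _ ≤ |x| ^ 2 * (1 / 2) ^ n / 4 := by
          have := mul_le_mul_of_nonneg_left hxn (by positivity : (0:ℝ) ≤ |x| ^ 2)
          linarith
      _ = x ^ 2 / 4 * (1 / 2) ^ n := by rw [sq_abs]; ring
  have hsg : Summable (fun n : ℕ => x ^ 2 / 4 * (1 / 2 : ℝ) ^ n) :=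
    (summable_geometric_of_lt_one (by norm_num) (by norm_num)).mul_left _
  have hsn : Summable (fun n : ℕ => ‖x ^ (n + 2) / ((n : ℝ) + 2) ^ 2‖) :=
    Summable.of_nonneg_of_le (fun n => norm_nonneg _) hbound hsg
  calc |∑' n : ℕ, x ^ (n + 2) / ((n : ℝ) + 2) ^ 2|
      ≤ ∑' n : ℕ, ‖x ^ (n + 2) / ((n : ℝ) + 2) ^ 2‖ := norm_tsum_le_tsum_norm hsn
    _ ≤ ∑' n : ℕ, x ^ 2 / 4 * (1 / 2 : ℝ) ^ n := Summable.tsum_le_tsum hbound hsn hsg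
    _ = x ^ 2 / 4 * (1 - 1 / 2)⁻¹ := by
        rw [tsum_mul_left, tsum_geometric_of_lt_one (by norm_num) (by norm_num)]
    _ = x ^ 2 / 2 := by ring

theorem stmt_5 (lam : ℝ) (hl0 : 0 < lam) (hl1 : lam ≤ 1) :
    2 * (Li2 (-lam ^ 2 / (1 + lam)) + Li2 (-lam / (1 + lam)))
      + Li2 (lam ^ 2 / (1 + lam) ^ 2) < 0 := by
  have hd : (0 : ℝ) < 1 + lam := by linarith
  set a : ℝ := lam / (1 + lam) with ha
  set b : ℝ := lam ^ 2 / (1 + lam) with hb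
  have ha0 : 0 < a := by positivity
  have hb0 : 0 < b := by positivity
  have ha2 : a ≤ 1 / 2 := by
    rw [ha, div_le_iff₀ hd]; linarith
  have hba : b ≤ a := by
    rw [ha, hb, div_le_div_iff₀ hd hd]; nlinarith
  have e1 : -lam ^ 2 / (1 + lam) = -b := by rw [hb]; ring
  have e2 : -lam / (1 + lam) = -a := by rw [ha]; ring
  have e3 : lam ^ 2 / (1 + lam) ^ 2 = a ^ 2 := by rw [ha, div_pow]
  rw [e1, e2, e3]
  have h1 : |Li2 (-b) - (-b)| ≤ (-b) ^ 2 / 2 := by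
    apply Li2_est; rw [abs_of_nonpos (by linarith)]; linarith
  have h2 : |Li2 (-a) - (-a)| ≤ (-a) ^ 2 / 2 := by
    apply Li2_est; rw [abs_of_nonpos (by linarith)]; linarith
  have h3 : |Li2 (a ^ 2) - a ^ 2| ≤ (a ^ 2) ^ 2 / 2 := by
    apply Li2_est; rw [abs_of_nonneg (by positivity)]; nlinarith
  rw [abs_le] at h1 h2 h3
  have hb2 : b ≤ 1 / 2 := hba.trans ha2
  have k1 : a * a ≤ a * (1 / 2) := mul_le_mul_of_nonneg_left ha2 ha0.le
  have k2 : b * b ≤ b * (1 / 2) := mul_le_mul_of_nonneg_left hb2 hb0.le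
  have k3 : a ^ 2 ≤ 1 / 4 := by nlinarith
  have k4 : a ^ 2 * a ^ 2 ≤ a ^ 2 * (1 / 4) := mul_le_mul_of_nonneg_left k3 (sq_nonneg a)
  nlinarith [h1.2, h2.2, h3.2, k1, k2, k4, ha0, hb0, ha2]
end

section
/- For λ ∈ (0,1], the logarithmic coefficients of f_λ(z) = z/((1−z)(1−λz)(1+(λ/(1+λ))z)) are γ_n(f_λ) = (1/2)·((1+λ^n)/n + (−1)^n·λ^n/(n(1+λ)^n)), and for every even n ≥ 2 one has γ_n(f_λ) > (1+λ^n)/(2n). -/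
open Complex Real

/-!
Since `f_λ(z)/z = ∏ (1 - aᵢ z)⁻¹` with `a = (1, λ, -λ/(1+λ))`, near `0` its principal logarithm
is `∑ -log (1 - aᵢ z) = ∑ₙ (∑ aᵢⁿ / n) zⁿ`, so `2 γₙ = (1 + λⁿ + (-λ/(1+λ))ⁿ) / n`; for even `n`
the last term is positive.
-/

theorem Complex.log_prod_inv_one_sub {ι : Type*} (s : Finset ι) (w : ι → ℂ)
    (hw : ∑ i ∈ s, ‖w i‖ ≤ 1 / 2) :
    log (∏ i ∈ s, (1 - w i)⁻¹) = ∑ i ∈ s, -log (1 - w i) := by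
  have hwi : ∀ i ∈ s, ‖w i‖ ≤ 1 / 2 := fun i hi ↦
    (Finset.single_le_sum (fun j _ ↦ norm_nonneg (w j)) hi).trans hw
  have hexp : ∏ i ∈ s, (1 - w i)⁻¹ = exp (∑ i ∈ s, -log (1 - w i)) := by
    rw [exp_sum]
    refine Finset.prod_congr rfl fun i hi ↦ ?_
    have hne : 1 - w i ≠ 0 := fun h ↦ by
      have := hwi i hi
      rw [← sub_eq_zero.1 h, norm_one] at this
      norm_num at this
    rw [exp_neg, exp_log hne]
  have hnorm : ‖∑ i ∈ s, -log (1 - w i)‖ ≤ 3 / 4 := calc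
    _ ≤ ∑ i ∈ s, ‖log (1 - w i)‖ := by simpa using norm_sum_le s fun i ↦ -log (1 - w i)
    _ ≤ ∑ i ∈ s, 3 / 2 * ‖w i‖ := Finset.sum_le_sum fun i hi ↦ by
      simpa [sub_eq_add_neg] using
        norm_log_one_add_half_le_self (z := -w i) (by simpa using hwi i hi)
    _ ≤ 3 / 4 := by rw [← Finset.mul_sum]; linarith
  have him : |(∑ i ∈ s, -log (1 - w i)).im| < π :=
    (abs_im_le_norm _).trans_lt (by linarith [pi_gt_three])
  rw [hexp, log_exp (by linarith [(abs_lt.1 him).1]) (abs_lt.1 him).2.le]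

theorem Complex.exists_log_prod_inv_one_sub_mul_eq_tsum {ι : Type*} (s : Finset ι) (a : ι → ℂ) :
    ∃ r > 0, ∀ z : ℂ, ‖z‖ < r →
      log (∏ i ∈ s, (1 - a i * z)⁻¹) =
        ∑' n : ℕ, (∑ i ∈ s, a i ^ (n + 1) / (n + 1)) * z ^ (n + 1) := by
  set A := ∑ i ∈ s, ‖a i‖
  have hA : 0 ≤ A := Finset.sum_nonneg fun i _ ↦ norm_nonneg (a i)
  refine ⟨1 / (2 * (1 + A)), by positivity, fun z hz ↦ ?_⟩
  have hsmall : ∑ i ∈ s, ‖a i * z‖ ≤ 1 / 2 := by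
    simp_rw [norm_mul, ← Finset.sum_mul]
    rw [lt_div_iff₀ (by positivity)] at hz
    nlinarith [norm_nonneg z]
  have hsum : HasSum (fun n : ℕ ↦ ∑ i ∈ s, (a i * z) ^ (n + 1) / (n + 1))
      (∑ i ∈ s, -log (1 - a i * z)) :=
    hasSum_sum fun i hi ↦ hasSum_taylorSeries_neg_log' <|
      ((Finset.single_le_sum (fun j _ ↦ norm_nonneg (a j * z)) hi).trans hsmall).trans_lt
        (by norm_num)
  rw [log_prod_inv_one_sub s _ hsmall, ← hsum.tsum_eq]
  simp_rw [mul_pow, Finset.sum_mul, mul_div_right_comm]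

theorem stmt_10_general (lam : ℝ) (hl0 : 0 < lam)
    (γ : ℕ → ℝ)
    (hγ : ∀ n : ℕ, 1 ≤ n →
      γ n = (1 / 2) * ((1 + lam ^ n) / n + (-1) ^ n * lam ^ n / (n * (1 + lam) ^ n))) :
    (∃ r > (0 : ℝ), ∀ z : ℂ, ‖z‖ < r → z ≠ 0 →
      Complex.log ((z / ((1 - z) * (1 - (lam : ℂ) * z) * (1 + ((lam / (1 + lam) : ℝ) : ℂ) * z))) / z)
        = 2 * ∑' n : ℕ, ((γ (n + 1) : ℝ) : ℂ) * z ^ (n + 1)) ∧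
    (∀ n : ℕ, 2 ≤ n → Even n → γ n > (1 + lam ^ n) / (2 * n)) := by
  obtain ⟨r, hr, hlog⟩ := exists_log_prod_inv_one_sub_mul_eq_tsum Finset.univ
    ![1, (lam : ℂ), -((lam / (1 + lam) : ℝ) : ℂ)]
  refine ⟨⟨r, hr, fun z hz hz0 ↦ ?_⟩, fun n hn hn_even ↦ ?_⟩
  · have h1lam : (1 + lam : ℂ) ≠ 0 := by exact_mod_cast (by positivity : 1 + lam ≠ 0)
    rw [div_div_cancel_left' hz0, ← tsum_mul_left]
    refine (congrArg Complex.log ?_).trans ((hlog z hz).trans (tsum_congr fun n ↦ ?_))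
    · simp [Fin.prod_univ_three]
    rw [hγ (n + 1) (by omega), ← mul_assoc]
    congr 1
    simp only [Fin.sum_univ_three, Matrix.cons_val_zero, Matrix.cons_val_one, Matrix.cons_val,
      one_pow]
    push_cast
    rw [neg_pow, div_pow]
    field_simp
  · rw [hγ n (by omega), hn_even.neg_one_pow, one_mul, gt_iff_lt]
    have hpos : 0 < lam ^ n / (n * (1 + lam) ^ n) := by positivity
    calc (1 + lam ^ n) / (2 * n)
        < (1 + lam ^ n) / (2 * n) + lam ^ n / (n * (1 + lam) ^ n) / 2 := by linarith
      _ = _ := by ring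

theorem stmt_10 (lam : ℝ) (hl0 : 0 < lam) (hl1 : lam ≤ 1)
    (γ : ℕ → ℝ)
    (hγ : ∀ n : ℕ, 1 ≤ n →
      γ n = (1 / 2) * ((1 + lam ^ n) / n + (-1) ^ n * lam ^ n / (n * (1 + lam) ^ n))) :
    (∃ r > (0 : ℝ), ∀ z : ℂ, ‖z‖ < r → z ≠ 0 →
      Complex.log ((z / ((1 - z) * (1 - (lam : ℂ) * z) * (1 + ((lam / (1 + lam) : ℝ) : ℂ) * z))) / z)
        = 2 * ∑' n : ℕ, ((γ (n + 1) : ℝ) : ℂ) * z ^ (n + 1)) ∧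
    (∀ n : ℕ, 2 ≤ n → Even n → γ n > (1 + lam ^ n) / (2 * n)) :=
  stmt_10_general lam hl0 γ hγ
end

section
/- For λ ∈ (0,1], ∑_{n=1}^∞ |γ_n(f_λ)|² = (1/4)(π²/6 + 2Li₂(λ) + Li₂(λ²)) + (1/2)[Li₂(−λ²/(1+λ)) + Li₂(−λ/(1+λ))] + (1/4)Li₂(λ²/(1+λ)²), where γ_n(f_λ) = (1/2)((1+λ^n)/n + (−1)^n λ^n/(n(1+λ)^n)). -/
open Real

/-!
Expanding the square of `γ_n` and using `((-1)^n)^2 = 1`, the term `γ_n^2` is a combination of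
`xⁿ/n²` for `x = 1, λ, λ², -λ²/(1+λ), -λ/(1+λ), λ²/(1+λ)²`. All of these satisfy `|x| ≤ 1`
when `0 < λ ≤ 1`, so each series sums to `Li₂ x`, and `Li₂ 1 = ζ(2) = π²/6`.
-/

lemma summable_Li2 {x : ℝ} (hx : |x| ≤ 1) :
    Summable fun n : ℕ => x ^ (n + 1) / ((n : ℝ) + 1) ^ 2 := by
  refine .of_norm_bounded (g := fun n : ℕ => 1 / ((n : ℝ) + 1) ^ 2) ?_ fun n => ?_
  · exact_mod_cast (summable_nat_add_iff 1).mpr (Real.summable_one_div_nat_pow.mpr one_lt_two)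
  · rw [norm_div, norm_pow, Real.norm_eq_abs, norm_of_nonneg (by positivity)]
    gcongr
    exact pow_le_one₀ (abs_nonneg x) hx

lemma hasSum_Li2 {x : ℝ} (hx : |x| ≤ 1) :
    HasSum (fun n : ℕ => x ^ (n + 1) / ((n : ℝ) + 1) ^ 2) (Li2 x) :=
  (summable_Li2 hx).hasSum

lemma Li2_one : Li2 1 = π ^ 2 / 6 := by
  simpa [Li2] using ((hasSum_nat_add_iff' 1).mpr hasSum_zeta_two).tsum_eq

lemma logCoeff_sq_eq_dilog_terms (lam : ℝ) (hl : 1 + lam ≠ 0) (m : ℕ) :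
    ((1 / 2) * ((1 + lam ^ m) / m + (-1) ^ m * lam ^ m / (m * (1 + lam) ^ m))) ^ 2
      = (1 / 4) * (1 / (m : ℝ) ^ 2 + 2 * (lam ^ m / (m : ℝ) ^ 2) + (lam ^ 2) ^ m / (m : ℝ) ^ 2)
        + (1 / 2) * ((-lam ^ 2 / (1 + lam)) ^ m / (m : ℝ) ^ 2
          + (-lam / (1 + lam)) ^ m / (m : ℝ) ^ 2)
        + (1 / 4) * ((lam ^ 2 / (1 + lam) ^ 2) ^ m / (m : ℝ) ^ 2) := by
  have pow_sq_comm (x : ℝ) : (x ^ 2) ^ m = (x ^ m) ^ 2 := by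
    rw [← pow_mul, ← pow_mul, mul_comm]
  simp only [neg_div, neg_pow (_ / _), div_pow, pow_sq_comm]
  rcases neg_one_pow_eq_or ℝ m with h | h <;> rw [h] <;> field_simp <;> ring

theorem stmt_11 (lam : ℝ) (hl0 : 0 < lam) (hl1 : lam ≤ 1)
    (γ : ℕ → ℝ)
    (hγ : ∀ n : ℕ, 1 ≤ n →
      γ n = (1 / 2) * ((1 + lam ^ n) / n + (-1) ^ n * lam ^ n / (n * (1 + lam) ^ n))) :
    ∑' n : ℕ, |γ (n + 1)| ^ 2
      = (1 / 4) * (π ^ 2 / 6 + 2 * Li2 lam + Li2 (lam ^ 2))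
        + (1 / 2) * (Li2 (-lam ^ 2 / (1 + lam)) + Li2 (-lam / (1 + lam)))
        + (1 / 4) * Li2 (lam ^ 2 / (1 + lam) ^ 2) := by
  have h1 : 0 < 1 + lam := by linarith
  have hlam : |lam| ≤ 1 := by rwa [abs_of_pos hl0]
  have hsq : |lam ^ 2| ≤ 1 := by rw [abs_pow]; exact pow_le_one₀ (abs_nonneg _) hlam
  have hmix : |-lam ^ 2 / (1 + lam)| ≤ 1 := by
    rw [abs_div, abs_neg, abs_of_pos h1, abs_of_pos (by positivity), div_le_one h1]; nlinarith
  have hfrac : |-lam / (1 + lam)| ≤ 1 := by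
    rw [abs_div, abs_neg, abs_of_pos h1, abs_of_pos hl0, div_le_one h1]; linarith
  have hfrac_sq : |lam ^ 2 / (1 + lam) ^ 2| ≤ 1 := by
    rw [← div_pow, abs_pow, ← abs_neg, ← neg_div]
    exact pow_le_one₀ (abs_nonneg _) hfrac
  have hsum :=
    ((((hasSum_Li2 (x := 1) (by simp)).add ((hasSum_Li2 hlam).mul_left 2)).add
        (hasSum_Li2 hsq)).mul_left (1 / 4)).add
      (((hasSum_Li2 hmix).add (hasSum_Li2 hfrac)).mul_left (1 / 2)) |>.add
      ((hasSum_Li2 hfrac_sq).mul_left (1 / 4))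
  rw [← Li2_one]
  refine (hsum.congr_fun fun n => ?_).tsum_eq
  rw [hγ (n + 1) n.succ_pos, sq_abs, logCoeff_sq_eq_dilog_terms lam h1.ne', one_pow]
  push_cast
  rfl
end

section
/- Suppose 0 < λ < 1 and complex numbers a₂, c₁, c₂ satisfy (1−λ)a₂ = (1−λ²)c₁, (1−λ)a₃ = (1−λ²)c₂ + (1−λ³)c₁², with |c₁| ≤ 1 and |c₂| ≤ 1 − |c₁|². Then |a₂| ≤ 1 + λ and |a₃| ≤ 1 + λ + λ². -/
theorem stmt_16 (lam : ℝ) (hl0 : 0 < lam) (hl1 : lam < 1)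
    (a₂ a₃ c₁ c₂ : ℂ)
    (h2 : (1 - lam : ℂ) * a₂ = (1 - (lam : ℂ) ^ 2) * c₁)
    (h3 : (1 - lam : ℂ) * a₃ = (1 - (lam : ℂ) ^ 2) * c₂ + (1 - (lam : ℂ) ^ 3) * c₁ ^ 2)
    (hc1 : ‖c₁‖ ≤ 1) (hc2 : ‖c₂‖ ≤ 1 - ‖c₁‖ ^ 2) :
    ‖a₂‖ ≤ 1 + lam ∧ ‖a₃‖ ≤ 1 + lam + lam ^ 2 := by
  have h1 : (0:ℝ) < 1 - lam := by linarith
  have p2 : (0:ℝ) ≤ 1 - lam^2 := by nlinarith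
  have p3 : (0:ℝ) ≤ 1 - lam^3 := by nlinarith
  have hn : ‖(1 - (lam:ℂ))‖ = 1 - lam := by
    rw [show (1 - (lam:ℂ)) = ((1 - lam : ℝ) : ℂ) by push_cast; ring,
      Complex.norm_real, Real.norm_of_nonneg h1.le]
  have hn2 : ‖(1 - (lam:ℂ)^2)‖ = 1 - lam^2 := by
    rw [show (1 - (lam:ℂ)^2) = ((1 - lam^2 : ℝ) : ℂ) by push_cast; ring,
      Complex.norm_real, Real.norm_of_nonneg p2]
  have hn3 : ‖(1 - (lam:ℂ)^3)‖ = 1 - lam^3 := by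
    rw [show (1 - (lam:ℂ)^3) = ((1 - lam^3 : ℝ) : ℂ) by push_cast; ring,
      Complex.norm_real, Real.norm_of_nonneg p3]
  have hc1' : (0:ℝ) ≤ ‖c₁‖ := norm_nonneg _
  have ht : ‖c₁‖^2 ≤ 1 := by nlinarith
  constructor
  · have h2' := congrArg norm h2
    rw [norm_mul, norm_mul, hn, hn2] at h2'
    refine le_of_mul_le_mul_left ?_ h1
    have := mul_le_mul_of_nonneg_left hc1 p2
    nlinarith
  · have e3 := congrArg norm h3
    rw [norm_mul, hn] at e3
    have hb : ‖(1 - (lam:ℂ)^2) * c₂ + (1 - (lam:ℂ)^3) * c₁^2‖ ≤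
        (1-lam^2)*‖c₂‖ + (1-lam^3)*‖c₁‖^2 := by
      calc _ ≤ ‖(1 - (lam:ℂ)^2) * c₂‖ + ‖(1 - (lam:ℂ)^3) * c₁^2‖ := norm_add_le _ _
        _ = (1-lam^2)*‖c₂‖ + (1-lam^3)*‖c₁‖^2 := by
            rw [norm_mul, norm_mul, hn2, hn3, norm_pow]
    refine le_of_mul_le_mul_left ?_ h1
    have k1 := mul_le_mul_of_nonneg_left hc2 p2
    nlinarith [mul_le_mul_of_nonneg_left ht (mul_nonneg hl0.le hl0.le)]
end
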